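/- arXiv:2312.05441 — 2 statements merged into one kernel-verified Lean document; each statement's English description precedes it below -/
import Mathlib

section
/- The set of homogeneous polynomials of degree 3 in ℝ[x,y,z] that vanish on the union of the planes y+z=0, z+x=0, x+y=0 is a one-dimensional real vector space spanned by (x+y)(y+z)(z+x). -/
/-!
If `P` vanishes on the hyperplane `X i + X j = 0`, substituting `X i ↦ -X j` kills it, while
`P` minus that substitution is always divisible by `X i + X j`. Applying this to the three planes in
turn, and cancelling the factors already extracted (the polynomial ring is a domain), shows that
`(x+y)(y+z)(z+x)` divides every cubic form vanishing on their union; the cofactor has degree `0`.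
-/

open MvPolynomial

namespace MvPolynomial

variable {σ R : Type*} [CommRing R]

section Substitution

variable [DecidableEq σ]

noncomputable def substNegX (i j : σ) : MvPolynomial σ R →ₐ[R] MvPolynomial σ R :=
  aeval (Function.update X i (-X j))

theorem X_add_X_dvd_sub_substNegX (i j : σ) (P : MvPolynomial σ R) :
    X i + X j ∣ P - substNegX i j P := by
  induction P using MvPolynomial.induction_on with
  | C a => simp [substNegX]
  | add p q hp hq => rw [map_add, add_sub_add_comm]; exact dvd_add hp hq
  | mul_X p k hp =>
    have hX : X i + X j ∣ (X k - substNegX i j (X k) : MvPolynomial σ R) := by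
      by_cases hk : k = i
      · subst hk; simp [substNegX]
      · simp [substNegX, hk]
    rw [map_mul, show p * X k - substNegX i j p * substNegX i j (X k) =
      (p - substNegX i j p) * X k + substNegX i j p * (X k - substNegX i j (X k)) by ring]
    exact dvd_add (dvd_mul_of_dvd_left hp _) (dvd_mul_of_dvd_right hX _)

theorem eval_substNegX (i j : σ) (v : σ → R) (P : MvPolynomial σ R) :
    eval v (substNegX i j P) = eval (Function.update v i (-v j)) P := by
  induction P using MvPolynomial.induction_on with
  | C a => simp [substNegX]
  | add p q hp hq => simp only [map_add, hp, hq]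
  | mul_X p k hp =>
    by_cases hk : k = i
    · subst hk; simp_all [substNegX]
    · simp_all [substNegX]

variable [IsDomain R] [Infinite R] {i j : σ}

theorem substNegX_eq_zero_of_eval_eq_zero (hij : i ≠ j) {P : MvPolynomial σ R}
    (hP : ∀ v : σ → R, v i + v j = 0 → eval v P = 0) : substNegX i j P = 0 :=
  funext fun v => by
    rw [eval_substNegX, map_zero]
    exact hP _ (by rw [Function.update_self, Function.update_of_ne hij.symm, neg_add_cancel])

theorem X_add_X_dvd_of_eval_mul_eq_zero (hij : i ≠ j) {A Q : MvPolynomial σ R}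
    (hA : ∃ v : σ → R, v i + v j = 0 ∧ eval v A ≠ 0)
    (hAQ : ∀ v : σ → R, v i + v j = 0 → eval v (A * Q) = 0) : X i + X j ∣ Q := by
  obtain ⟨v, hv, hAv⟩ := hA
  have hA' : substNegX i j A ≠ 0 := by
    refine ne_of_apply_ne (eval v) ?_
    rwa [eval_substNegX, map_zero,
      Function.update_eq_self_iff.mpr (eq_neg_of_add_eq_zero_left hv).symm]
  have hQ' : substNegX i j Q = 0 := by
    refine (mul_eq_zero.mp ?_).resolve_left hA'
    rw [← map_mul]
    exact substNegX_eq_zero_of_eval_eq_zero hij hAQ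
  simpa [hQ'] using X_add_X_dvd_sub_substNegX i j Q

end Substitution

theorem X_add_X_ne_zero [Nontrivial R] {i j : σ} (hij : i ≠ j) :
    (X i + X j : MvPolynomial σ R) ≠ 0 := by
  classical
  refine ne_of_apply_ne (eval (Pi.single i 1)) ?_
  simp [hij.symm]

theorem eq_C_of_isHomogeneous_mul [IsDomain R] {n : ℕ} {S Q : MvPolynomial σ R}
    (hS : S.IsHomogeneous n) (hS0 : S ≠ 0) (hSQ : (S * Q).IsHomogeneous n) :
    Q = C (Q.coeff 0) := by
  by_cases hQ : Q = 0
  · simp [hQ]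
  rw [← totalDegree_eq_zero_iff_eq_C]
  have hdeg := hSQ.totalDegree (mul_ne_zero hS0 hQ)
  rw [totalDegree_mul_of_isDomain hS0 hQ, hS.totalDegree hS0] at hdeg
  omega

end MvPolynomial

section ThreePlanes

variable {R : Type*} [CommRing R]

theorem eval_planes_product (v : Fin 3 → R) :
    eval v ((X 0 + X 1) * (X 1 + X 2) * (X 2 + X 0) : MvPolynomial (Fin 3) R) =
      (v 0 + v 1) * (v 1 + v 2) * (v 2 + v 0) := by
  simp

theorem isHomogeneous_planes_product :
    ((X 0 + X 1) * (X 1 + X 2) * (X 2 + X 0) : MvPolynomial (Fin 3) R).IsHomogeneous 3 := by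
  have hX (i : Fin 3) : (X i : MvPolynomial (Fin 3) R).IsHomogeneous 1 := isHomogeneous_X _ _
  exact (((hX 0).add (hX 1)).mul ((hX 1).add (hX 2))).mul ((hX 2).add (hX 0))

theorem planes_product_ne_zero [IsDomain R] :
    ((X 0 + X 1) * (X 1 + X 2) * (X 2 + X 0) : MvPolynomial (Fin 3) R) ≠ 0 :=
  mul_ne_zero (mul_ne_zero (X_add_X_ne_zero (by decide)) (X_add_X_ne_zero (by decide)))
    (X_add_X_ne_zero (by decide))

theorem eval_eq_zero_of_mem_span_planes_product {P : MvPolynomial (Fin 3) R}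
    (hP : P ∈ Submodule.span R {(X 0 + X 1) * (X 1 + X 2) * (X 2 + X 0)}) (v : Fin 3 → R)
    (hv : v 1 + v 2 = 0 ∨ v 2 + v 0 = 0 ∨ v 0 + v 1 = 0) : eval v P = 0 := by
  obtain ⟨c, rfl⟩ := Submodule.mem_span_singleton.mp hP
  rw [smul_eq_C_mul, map_mul, eval_planes_product]
  rcases hv with hv | hv | hv <;> simp [hv]

theorem planes_product_dvd_of_eval_eq_zero [IsDomain R] [Infinite R]
    {P : MvPolynomial (Fin 3) R}
    (hP : ∀ v : Fin 3 → R, (v 1 + v 2 = 0 ∨ v 2 + v 0 = 0 ∨ v 0 + v 1 = 0) → eval v P = 0) :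
    (X 0 + X 1) * (X 1 + X 2) * (X 2 + X 0) ∣ P := by
  obtain ⟨Q₁, rfl⟩ : X 0 + X 1 ∣ P :=
    X_add_X_dvd_of_eval_mul_eq_zero (A := 1) (by decide) ⟨![1, -1, 0], by simp, by simp⟩
      fun v hv => by simpa using hP v (.inr (.inr hv))
  obtain ⟨Q₂, rfl⟩ : X 1 + X 2 ∣ Q₁ :=
    X_add_X_dvd_of_eval_mul_eq_zero (by decide) ⟨![1, 0, 0], by simp, by simp⟩
      fun v hv => hP v (.inl hv)
  obtain ⟨Q₃, rfl⟩ : X 2 + X 0 ∣ Q₂ :=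
    X_add_X_dvd_of_eval_mul_eq_zero (A := (X 0 + X 1) * (X 1 + X 2)) (by decide)
      ⟨![1, 0, -1], by simp, by simp⟩ fun v hv => by rw [mul_assoc]; exact hP v (.inr (.inl hv))
  exact ⟨Q₃, by ring⟩

end ThreePlanes

theorem degree_three_vanishing_spanned_by_S :
    (∀ P : MvPolynomial (Fin 3) ℝ,
      (P.IsHomogeneous 3 ∧
        ∀ v : Fin 3 → ℝ, (v 1 + v 2 = 0 ∨ v 2 + v 0 = 0 ∨ v 0 + v 1 = 0) →
          eval v P = 0) ↔
      P ∈ Submodule.span ℝ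
        {((X 0 + X 1) * (X 1 + X 2) * (X 2 + X 0) : MvPolynomial (Fin 3) ℝ)}) ∧
    ((X 0 + X 1) * (X 1 + X 2) * (X 2 + X 0) : MvPolynomial (Fin 3) ℝ) ≠ 0 := by
  refine ⟨fun P => ⟨?_, fun hP => ⟨?_, eval_eq_zero_of_mem_span_planes_product hP⟩⟩,
    planes_product_ne_zero⟩
  · rintro ⟨hhom, hvan⟩
    obtain ⟨Q, rfl⟩ := planes_product_dvd_of_eval_eq_zero hvan
    rw [eq_C_of_isHomogeneous_mul isHomogeneous_planes_product planes_product_ne_zero hhom]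
    exact Submodule.mem_span_singleton.mpr ⟨Q.coeff 0, by rw [smul_eq_C_mul, mul_comm]⟩
  · obtain ⟨c, rfl⟩ := Submodule.mem_span_singleton.mp hP
    rw [smul_eq_C_mul]
    exact isHomogeneous_planes_product.C_mul c
end

section
/- In ℝ[x,y,z], the intersection ⟨y+z⟩ ∩ ⟨z+x⟩ ∩ ⟨x+y⟩ equals the real radical of the product ideal ⟨y+z⟩·⟨z+x⟩·⟨x+y⟩. -/
open MvPolynomial

private lemma mem_span_of_subst_eq_zero (i j : Fin 3) (p : MvPolynomial (Fin 3) ℝ)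
    (h : aeval (fun k => if k = i then (-X j : MvPolynomial (Fin 3) ℝ) else X k) p = 0) :
    p ∈ Ideal.span {(X i + X j : MvPolynomial (Fin 3) ℝ)} := by
  set I := Ideal.span {(X i + X j : MvPolynomial (Fin 3) ℝ)}
  have hπ : (Ideal.Quotient.mkₐ ℝ I).comp
      (aeval (fun k => if k = i then (-X j : MvPolynomial (Fin 3) ℝ) else X k)) =
      Ideal.Quotient.mkₐ ℝ I := by
    apply MvPolynomial.algHom_ext
    intro k
    simp only [AlgHom.comp_apply, aeval_X]
    by_cases hk : k = i
    · subst hk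
      simp only [if_pos rfl, if_true, Ideal.Quotient.mkₐ_eq_mk]
      rw [eq_comm, Ideal.Quotient.eq]
      have : (X k : MvPolynomial (Fin 3) ℝ) - (-X j) = X k + X j := by ring
      rw [this]
      exact Ideal.subset_span rfl
    · simp [hk]
  have h2 := AlgHom.congr_fun hπ p
  simp only [AlgHom.comp_apply, h, map_zero, Ideal.Quotient.mkₐ_eq_mk] at h2
  rw [← Ideal.Quotient.eq_zero_iff_mem, ← h2]

private lemma eval_zero_of_dvd (p : MvPolynomial (Fin 3) ℝ) (k m : ℕ)
    (q : Fin m → MvPolynomial (Fin 3) ℝ) (hk : 1 ≤ k)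
    (h : ((X 1 + X 2) * (X 2 + X 0) * (X 0 + X 1) : MvPolynomial (Fin 3) ℝ) ∣
      p ^ (2 * k) + ∑ i, (q i) ^ 2)
    (v : Fin 3 → ℝ)
    (hv : eval v ((X 1 + X 2) * (X 2 + X 0) * (X 0 + X 1) : MvPolynomial (Fin 3) ℝ) = 0) :
    eval v p = 0 := by
  obtain ⟨f, hf⟩ := h
  have heq := congrArg (eval v) hf
  simp only [map_add, map_mul, map_pow, map_sum, hv, zero_mul] at heq
  have hnn : (0:ℝ) ≤ ∑ i, (eval v (q i)) ^ 2 := Finset.sum_nonneg fun i _ => sq_nonneg _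
  have hpw : (0:ℝ) ≤ (eval v p) ^ (2 * k) := (even_two_mul k).pow_nonneg _
  have hp2 : (eval v p) ^ (2 * k) = 0 := by linarith
  exact pow_eq_zero_iff (by omega) |>.mp hp2

theorem inf_eq_realRadical_of_product :
    ∀ p : MvPolynomial (Fin 3) ℝ,
      (p ∈ Ideal.span {(X 1 + X 2 : MvPolynomial (Fin 3) ℝ)} ⊓
            Ideal.span {(X 2 + X 0 : MvPolynomial (Fin 3) ℝ)} ⊓
            Ideal.span {(X 0 + X 1 : MvPolynomial (Fin 3) ℝ)}) ↔
      (∃ (k : ℕ) (m : ℕ) (q : Fin m → MvPolynomial (Fin 3) ℝ), 1 ≤ k ∧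
        p ^ (2 * k) + ∑ i, (q i) ^ 2 ∈
          Ideal.span {(X 1 + X 2 : MvPolynomial (Fin 3) ℝ)} *
            Ideal.span {(X 2 + X 0 : MvPolynomial (Fin 3) ℝ)} *
            Ideal.span {(X 0 + X 1 : MvPolynomial (Fin 3) ℝ)}) := by
  intro p
  constructor
  · rintro ⟨⟨h1, h2⟩, h3⟩
    refine ⟨2, 0, fun i => 0, by norm_num, ?_⟩
    have h4 : p ^ 3 ∈ Ideal.span {(X 1 + X 2 : MvPolynomial (Fin 3) ℝ)} *
        Ideal.span {(X 2 + X 0 : MvPolynomial (Fin 3) ℝ)} *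
        Ideal.span {(X 0 + X 1 : MvPolynomial (Fin 3) ℝ)} := by
      have : p ^ 3 = p * p * p := by ring
      rw [this]
      exact Ideal.mul_mem_mul (Ideal.mul_mem_mul h1 h2) h3
    have : p ^ (2 * 2) + ∑ i : Fin 0, (0 : MvPolynomial (Fin 3) ℝ) ^ 2 = p * p ^ 3 := by
      simp; ring
    rw [this]
    exact Ideal.mul_mem_left _ _ h4
  · rintro ⟨k, m, q, hk, hmem⟩
    rw [Ideal.span_singleton_mul_span_singleton, Ideal.span_singleton_mul_span_singleton,
      Ideal.mem_span_singleton] at hmem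
    have key : ∀ (i j : Fin 3), i ≠ j →
        (∀ v : Fin 3 → ℝ, v i + v j = 0 →
          eval v ((X 1 + X 2) * (X 2 + X 0) * (X 0 + X 1) : MvPolynomial (Fin 3) ℝ) = 0) →
        p ∈ Ideal.span {(X i + X j : MvPolynomial (Fin 3) ℝ)} := by
      intro i j hne hij
      apply mem_span_of_subst_eq_zero i j
      apply MvPolynomial.funext (q := 0)
      intro v
      rw [map_zero]
      have : eval v (aeval (fun k => if k = i then (-X j : MvPolynomial (Fin 3) ℝ)
          else X k) p) = eval (fun k => eval v (if k = i then (-X j : MvPolynomial (Fin 3) ℝ)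
          else X k)) p := by
        rw [aeval_def, MvPolynomial.algebraMap_eq, ← eval_assoc]
        rfl
      rw [this]
      apply eval_zero_of_dvd p k m q hk hmem
      apply hij
      simp [Ne.symm hne]
    refine ⟨⟨key 1 2 (by decide) ?_, key 2 0 (by decide) ?_⟩, key 0 1 (by decide) ?_⟩ <;>
        intro v hv <;> simp only [map_mul, map_add, eval_X]
    · linear_combination ((v 0 + v 2) * (v 0 + v 1)) * hv
    · linear_combination ((v 1 + v 2) * (v 0 + v 1)) * hv
    · linear_combination ((v 1 + v 2) * (v 0 + v 2)) * hv
end
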